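/- arXiv:1812.10939 — 2 statements merged into one kernel-verified Lean document; each statement's English description precedes it below -/
import Mathlib

section
/- Under the strong-mixing framework, let s ≤ t, let h : X → ℝ be bounded measurable with osc(h) ≤ h∞, let (φ_u)_{u=s}^{t−1} be arbitrary probability measures on X, and define T_{s|s} := h and T_{s|u+1}(y) := ∫ T_{s|u}(x) B_{φ_u}(y, dx). Then for every probability measure φ on X (in particular for the filter φ_t), the variance term satisfies φ((T_{s|t} − φ(T_{s|t}))²) ≤ ρ^{2(t−s)} · h∞². -/
open MeasureTheory

/-- Oscillation of a real-valued function: `osc f = sup_{x,x'} |f x − f x'|`. -/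
noncomputable def osc {X : Type*} (f : X → ℝ) : ℝ := ⨆ p : X × X, |f p.1 - f p.2|

/-- The backward statistics `T_{s|s+k}` defined by `T_{s|s} = h` and
`T_{s|u+1}(y) = (∫ T_{s|u}(x) q(x,y) φ_u(dx)) / (∫ q(x,y) φ_u(dx))`,
indexed here by `k = u − s`. -/
noncomputable def Tseq {X : Type*} [MeasurableSpace X]
    (q : X → X → ℝ) (φ : ℕ → Measure X) (s : ℕ) (h : X → ℝ) : ℕ → X → ℝ
  | 0 => h
  | k + 1 => fun y =>
      (∫ x, Tseq q φ s h k x * q x y ∂(φ (s + k))) / ∫ x, q x y ∂(φ (s + k))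

lemma aux_integrable_of_bdd {X : Type*} [MeasurableSpace X] {μ : Measure X} [IsFiniteMeasure μ]
    {g : X → ℝ} (hg : Measurable g) (M : ℝ) (hM : ∀ x, |g x| ≤ M) : Integrable g μ :=
  (integrable_const M).mono' hg.aestronglyMeasurable (ae_of_all _ fun x => by
    simpa using hM x)

section

variable {X : Type*} [MeasurableSpace X]
    (q : X → X → ℝ) (hq : Measurable (Function.uncurry q))
    (εlo εhi : ℝ) (hεlo : 0 < εlo) (hεhi : εlo < εhi)
    (hqb : ∀ x x', q x x' ∈ Set.Icc εlo εhi)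

section onestep
variable (μ : Measure X) [IsProbabilityMeasure μ]
include hq hεlo hεhi hqb

lemma aux_integrable_q (y : X) : Integrable (fun x => q x y) μ :=
  aux_integrable_of_bdd (hq.of_uncurry_right) εhi fun x => by
    have := hqb x y; rw [abs_le]; constructor <;> nlinarith [this.1, this.2]

lemma aux_Z_pos (y : X) : εlo ≤ ∫ x, q x y ∂μ := by
  have : ∫ (_ : X), εlo ∂μ ≤ ∫ x, q x y ∂μ :=
    integral_mono (integrable_const εlo) (aux_integrable_q q hq εlo εhi hεlo hεhi hqb μ y)
      (fun x => (hqb x y).1)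
  simpa using this

lemma aux_Z_le (y : X) : ∫ x, q x y ∂μ ≤ εhi := by
  have : ∫ x, q x y ∂μ ≤ ∫ (_ : X), εhi ∂μ :=
    integral_mono (aux_integrable_q q hq εlo εhi hεlo hεhi hqb μ y) (integrable_const εhi)
      (fun x => (hqb x y).2)
  simpa using this

/-- one-sided one-step contraction -/
lemma aux_step_le (f : X → ℝ) (hf : Measurable f) (C : ℝ) (hfb : ∀ x, |f x| ≤ C)
    (D : ℝ) (hD : ∀ x x', f x - f x' ≤ D) (y y' : X) :
    (∫ x, f x * q x y ∂μ) / (∫ x, q x y ∂μ) - (∫ x, f x * q x y' ∂μ) / (∫ x, q x y' ∂μ)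
      ≤ (1 - εlo / εhi) * D := by
  have hX : Nonempty X := ⟨y⟩
  set Z : X → ℝ := fun y => ∫ x, q x y ∂μ with hZ
  have hZpos : ∀ y, 0 < Z y := fun y => lt_of_lt_of_le hεlo (aux_Z_pos q hq εlo εhi hεlo hεhi hqb μ y)
  have hZle : ∀ y, Z y ≤ εhi := fun y => aux_Z_le q hq εlo εhi hεlo hεhi hqb μ y
  set p : X → X → ℝ := fun y x => q x y / Z y with hp
  have hpmeas : ∀ y, Measurable (p y) := fun y => (hq.of_uncurry_right).div_const _
  have hpbd : ∀ y x, |p y x| ≤ εhi / εlo := by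
    intro y x
    rw [abs_of_nonneg (div_nonneg (le_of_lt (lt_of_lt_of_le hεlo (hqb x y).1)) (hZpos y).le)]
    apply div_le_div₀ (le_of_lt (lt_of_lt_of_le hεlo hεhi.le)) (hqb x y).2 hεlo
      (aux_Z_pos q hq εlo εhi hεlo hεhi hqb μ y)
  have hplo : ∀ y x, εlo / εhi ≤ p y x := by
    intro y x
    rw [div_le_div_iff₀ (lt_of_lt_of_le hεlo hεhi.le) (hZpos y)]
    calc εlo * Z y ≤ εlo * εhi := by nlinarith [hZle y, hεlo]
      _ ≤ q x y * εhi := by nlinarith [(hqb x y).1, hεlo, hεhi]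
  have hpint : ∀ y, Integrable (p y) μ := fun y =>
    aux_integrable_of_bdd (hpmeas y) _ (hpbd y)
  have hpone : ∀ y, ∫ x, p y x ∂μ = 1 := by
    intro y
    simp only [hp, integral_div]
    exact div_self (hZpos y).ne'
  have hrw : ∀ y, (∫ x, f x * q x y ∂μ) / Z y = ∫ x, f x * p y x ∂μ := by
    intro y
    rw [← integral_div]
    congr 1; ext x; rw [hp]; ring
  rw [hrw y, hrw y']
  set c : ℝ := ⨅ x, f x with hc
  have hbdd : BddBelow (Set.range f) := ⟨-C, by rintro _ ⟨x, rfl⟩; linarith [abs_le.mp (hfb x) |>.1]⟩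
  have hcle : ∀ x, c ≤ f x := fun x => ciInf_le hbdd x
  have hfcD : ∀ x, f x - c ≤ D := by
    intro x
    have : f x - D ≤ c := le_ciInf fun x' => by linarith [hD x x']
    linarith
  have hfp_int : ∀ y, Integrable (fun x => f x * p y x) μ := fun y =>
    aux_integrable_of_bdd (hf.mul (hpmeas y)) (C * (εhi/εlo)) fun x => by
      rw [abs_mul]
      exact mul_le_mul (hfb x) (hpbd y x) (abs_nonneg _) ((abs_nonneg _).trans (hfb x))
  have hmin_int : Integrable (fun x => min (p y x) (p y' x)) μ :=
    aux_integrable_of_bdd ((hpmeas y).min (hpmeas y')) (εhi/εlo) fun x => by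
      rw [abs_of_nonneg (le_min (le_trans (div_nonneg hεlo.le (hεlo.trans hεhi).le) (hplo y x))
        (le_trans (div_nonneg hεlo.le (hεlo.trans hεhi).le) (hplo y' x)))]
      exact min_le_of_left_le ((le_abs_self _).trans (hpbd y x))
  have hcp : ∀ y, ∫ x, c * p y x ∂μ = c := by
    intro y; rw [integral_const_mul, hpone, mul_one]
  have key : ∫ x, f x * p y x ∂μ - ∫ x, f x * p y' x ∂μ
      = ∫ x, (f x - c) * (p y x - p y' x) ∂μ := by
    have : ∫ x, (f x - c) * (p y x - p y' x) ∂μ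
        = (∫ x, f x * p y x ∂μ - ∫ x, c * p y x ∂μ)
          - (∫ x, f x * p y' x ∂μ - ∫ x, c * p y' x ∂μ) := by
      rw [← integral_sub (hfp_int y) (aux_integrable_of_bdd ((hpmeas y).const_mul c) (|c| * (εhi/εlo)) fun x => by
            rw [abs_mul]; exact mul_le_mul_of_nonneg_left (hpbd y x) (abs_nonneg _)),
          ← integral_sub (hfp_int y') (aux_integrable_of_bdd ((hpmeas y').const_mul c) (|c| * (εhi/εlo)) fun x => by
            rw [abs_mul]; exact mul_le_mul_of_nonneg_left (hpbd y' x) (abs_nonneg _)),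
          ← integral_sub]
      · congr 1; ext x; ring
      · exact (hfp_int y).sub (aux_integrable_of_bdd ((measurable_const).mul (hpmeas y)) (|c| * (εhi/εlo)) fun x => by
          rw [abs_mul]; exact mul_le_mul_of_nonneg_left (hpbd y x) (abs_nonneg _))
      · exact (hfp_int y').sub (aux_integrable_of_bdd ((measurable_const).mul (hpmeas y')) (|c| * (εhi/εlo)) fun x => by
          rw [abs_mul]; exact mul_le_mul_of_nonneg_left (hpbd y' x) (abs_nonneg _))
    rw [this, hcp, hcp]
    ring
  rw [key]
  have step1 : ∫ x, (f x - c) * (p y x - p y' x) ∂μ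
      ≤ ∫ x, D * (p y x - min (p y x) (p y' x)) ∂μ := by
    apply integral_mono
    · refine aux_integrable_of_bdd ((hf.sub measurable_const).mul ((hpmeas y).sub (hpmeas y'))) ((|c|+C) * (2*(εhi/εlo))) fun x => ?_
      rw [abs_mul]
      apply mul_le_mul _ _ (abs_nonneg _) (by linarith [abs_nonneg c, (abs_nonneg (f y)).trans (hfb y)])
      · calc |f x - c| ≤ |f x| + |c| := abs_sub _ _
          _ ≤ |c| + C := by linarith [hfb x]
      · calc |p y x - p y' x| ≤ |p y x| + |p y' x| := abs_sub _ _
          _ ≤ 2 * (εhi/εlo) := by linarith [hpbd y x, hpbd y' x]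
    · exact (aux_integrable_of_bdd (hpmeas y) _ (hpbd y)).sub hmin_int |>.const_mul D
    · intro x
      have h1 : 0 ≤ f x - c := by linarith [hcle x]
      have h2 : p y x - p y' x ≤ p y x - min (p y x) (p y' x) := by
        have := min_le_right (p y x) (p y' x); linarith
      have h3 : 0 ≤ p y x - min (p y x) (p y' x) := by
        have := min_le_left (p y x) (p y' x); linarith
      calc (f x - c) * (p y x - p y' x) ≤ (f x - c) * (p y x - min (p y x) (p y' x)) :=
            mul_le_mul_of_nonneg_left h2 h1
        _ ≤ D * (p y x - min (p y x) (p y' x)) := mul_le_mul_of_nonneg_right (hfcD x) h3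
  have hD0 : 0 ≤ D := le_trans (by simp) (hD y y)
  have step2 : ∫ x, D * (p y x - min (p y x) (p y' x)) ∂μ ≤ (1 - εlo/εhi) * D := by
    rw [integral_const_mul]
    have hmin_ge : εlo/εhi ≤ ∫ x, min (p y x) (p y' x) ∂μ := by
      have : ∫ (_ : X), εlo/εhi ∂μ ≤ ∫ x, min (p y x) (p y' x) ∂μ :=
        integral_mono (integrable_const _) hmin_int fun x => le_min (hplo y x) (hplo y' x)
      simpa using this
    have : ∫ x, (p y x - min (p y x) (p y' x)) ∂μ ≤ 1 - εlo/εhi := by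
      rw [integral_sub (hpint y) hmin_int, hpone]
      linarith
    calc D * ∫ x, (p y x - min (p y x) (p y' x)) ∂μ ≤ D * (1 - εlo/εhi) :=
          mul_le_mul_of_nonneg_left this hD0
      _ = (1 - εlo/εhi) * D := by ring
  exact le_trans step1 step2

end onestep
end

lemma aux_Tseq_meas {X : Type*} [MeasurableSpace X] (q : X → X → ℝ)
    (hq : Measurable (Function.uncurry q))
    (φ : ℕ → Measure X) (hφ : ∀ u, IsProbabilityMeasure (φ u))
    (s : ℕ) (h : X → ℝ) (hh : Measurable h) :
    ∀ k, Measurable (Tseq q φ s h k)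
  | 0 => hh
  | k + 1 => by
    haveI := hφ (s+k)
    have ihm := aux_Tseq_meas q hq φ hφ s h hh k
    simp only [Tseq]
    apply Measurable.div
    · have hsm : StronglyMeasurable (fun yx : X × X => Tseq q φ s h k yx.2 * q yx.2 yx.1) :=
        ((ihm.comp measurable_snd).mul (hq.comp (measurable_snd.prodMk measurable_fst))).stronglyMeasurable
      exact hsm.integral_prod_right'.measurable
    · have hsm : StronglyMeasurable (fun yx : X × X => q yx.2 yx.1) :=
        (hq.comp (measurable_snd.prodMk measurable_fst)).stronglyMeasurable
      exact hsm.integral_prod_right'.measurable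

lemma aux_Tseq_bdd {X : Type*} [MeasurableSpace X] (q : X → X → ℝ)
    (hq : Measurable (Function.uncurry q))
    (εlo εhi : ℝ) (hεlo : 0 < εlo) (hεhi : εlo < εhi)
    (hqb : ∀ x x', q x x' ∈ Set.Icc εlo εhi)
    (φ : ℕ → Measure X) (hφ : ∀ u, IsProbabilityMeasure (φ u))
    (s : ℕ) (h : X → ℝ) (hh : Measurable h) (C : ℝ) (hhb : ∀ x, |h x| ≤ C) :
    ∀ k x, |Tseq q φ s h k x| ≤ C
  | 0 => hhb
  | k + 1 => by
    haveI := hφ (s+k)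
    have ih := aux_Tseq_bdd q hq εlo εhi hεlo hεhi hqb φ hφ s h hh C hhb k
    intro y
    have hC0 : 0 ≤ C := (abs_nonneg (h y)).trans (hhb y)
    simp only [Tseq]
    have hZpos : 0 < ∫ x, q x y ∂(φ (s+k)) :=
      lt_of_lt_of_le hεlo (aux_Z_pos q hq εlo εhi hεlo hεhi hqb _ y)
    rw [abs_div, abs_of_pos hZpos, div_le_iff₀ hZpos]
    have hmeas := aux_Tseq_meas q hq φ hφ s h hh k
    have hnum : |∫ x, Tseq q φ s h k x * q x y ∂(φ (s+k))|
        ≤ ∫ x, C * q x y ∂(φ (s+k)) := by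
      have hni := norm_integral_le_integral_norm (μ := φ (s+k))
        (f := fun x => Tseq q φ s h k x * q x y)
      rw [Real.norm_eq_abs] at hni
      refine hni.trans ?_
      apply integral_mono
      · refine aux_integrable_of_bdd (hmeas.mul hq.of_uncurry_right).norm (C * εhi) fun x => ?_
        simp only [Real.norm_eq_abs, abs_abs, abs_mul]
        apply mul_le_mul (ih x) _ (abs_nonneg _) hC0
        rw [abs_of_pos (lt_of_lt_of_le hεlo (hqb x y).1)]
        exact (hqb x y).2
      · exact (aux_integrable_q q hq εlo εhi hεlo hεhi hqb _ y).const_mul C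
      · intro x
        simp only [Real.norm_eq_abs, abs_mul]
        rw [abs_of_pos (lt_of_lt_of_le hεlo (hqb x y).1)]
        exact mul_le_mul_of_nonneg_right (ih x) (le_of_lt (lt_of_lt_of_le hεlo (hqb x y).1))
    calc |∫ x, Tseq q φ s h k x * q x y ∂(φ (s+k))| ≤ ∫ x, C * q x y ∂(φ (s+k)) := hnum
      _ = C * ∫ x, q x y ∂(φ (s+k)) := integral_const_mul _ _

lemma aux_Tseq_osc {X : Type*} [MeasurableSpace X] (q : X → X → ℝ)
    (hq : Measurable (Function.uncurry q))
    (εlo εhi : ℝ) (hεlo : 0 < εlo) (hεhi : εlo < εhi)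
    (hqb : ∀ x x', q x x' ∈ Set.Icc εlo εhi)
    (φ : ℕ → Measure X) (hφ : ∀ u, IsProbabilityMeasure (φ u))
    (s : ℕ) (h : X → ℝ) (hh : Measurable h) (C : ℝ) (hhb : ∀ x, |h x| ≤ C)
    (hinf : ℝ) (hoscp : ∀ x x', |h x - h x'| ≤ hinf) :
    ∀ k x x', |Tseq q φ s h k x - Tseq q φ s h k x'| ≤ (1 - εlo/εhi)^k * hinf
  | 0 => by simpa [Tseq] using hoscp
  | k + 1 => by
    haveI := hφ (s+k)
    have ih := aux_Tseq_osc q hq εlo εhi hεlo hεhi hqb φ hφ s h hh C hhb hinf hoscp k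
    intro y y'
    have hmeas := aux_Tseq_meas q hq φ hφ s h hh k
    have hbd := aux_Tseq_bdd q hq εlo εhi hεlo hεhi hqb φ hφ s h hh C hhb k
    have hD : ∀ x x', Tseq q φ s h k x - Tseq q φ s h k x' ≤ (1 - εlo/εhi)^k * hinf :=
      fun x x' => (le_abs_self _).trans (ih x x')
    have hstep1 := aux_step_le q hq εlo εhi hεlo hεhi hqb (φ (s+k))
      (Tseq q φ s h k) hmeas C hbd _ hD y y'
    have hstep2 := aux_step_le q hq εlo εhi hεlo hεhi hqb (φ (s+k))
      (Tseq q φ s h k) hmeas C hbd _ hD y' y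
    rw [abs_sub_le_iff]
    constructor
    · simp only [Tseq]
      calc _ ≤ (1 - εlo/εhi) * ((1 - εlo/εhi)^k * hinf) := hstep1
        _ = (1 - εlo/εhi)^(k+1) * hinf := by ring
    · simp only [Tseq]
      calc _ ≤ (1 - εlo/εhi) * ((1 - εlo/εhi)^k * hinf) := hstep2
        _ = (1 - εlo/εhi)^(k+1) * hinf := by ring

/-- under the strong mixing assumption, if `osc(h) ≤ h∞` then for every
probability measure `φ'` (in particular the filter `φ_t`) the variance term satisfies
`φ'((T_{s|t} − φ'(T_{s|t}))²) ≤ ρ^{2(t−s)} h∞²`. -/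
theorem stmt9 {X : Type*} [MeasurableSpace X]
    (q : X → X → ℝ) (hq : Measurable (Function.uncurry q))
    (εlo εhi : ℝ) (hεlo : 0 < εlo) (hεhi : εlo < εhi)
    (hqb : ∀ x x', q x x' ∈ Set.Icc εlo εhi)
    (ρ : ℝ) (hρ : ρ = 1 - εlo / εhi)
    (φ : ℕ → Measure X) (hφ : ∀ u, IsProbabilityMeasure (φ u))
    (s t : ℕ) (hst : s ≤ t)
    (h : X → ℝ) (hh : Measurable h) (C : ℝ) (hhb : ∀ x, |h x| ≤ C)
    (hinf : ℝ) (hosc : osc h ≤ hinf) :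
    ∀ (φ' : Measure X), IsProbabilityMeasure φ' →
      (∫ x, (Tseq q φ s h (t - s) x - ∫ x', Tseq q φ s h (t - s) x' ∂φ') ^ 2 ∂φ') ≤
        ρ ^ (2 * (t - s)) * hinf ^ 2 := by
  intro φ' hφ'
  haveI := hφ'
  have hX : Nonempty X := by
    by_contra hne
    rw [not_nonempty_iff] at hne
    have h1 : φ' Set.univ = 1 := measure_univ
    rw [Set.univ_eq_empty_iff.mpr hne, measure_empty] at h1
    exact zero_ne_one h1
  obtain ⟨x0⟩ := hX
  have hosc' : ∀ x x', |h x - h x'| ≤ hinf := by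
    intro x x'
    refine le_trans ?_ hosc
    refine le_ciSup (f := fun p : X × X => |h p.1 - h p.2|) ⟨2*C, ?_⟩ (x, x')
    rintro _ ⟨p, rfl⟩
    calc |h p.1 - h p.2| ≤ |h p.1| + |h p.2| := abs_sub _ _
      _ ≤ 2 * C := by linarith [hhb p.1, hhb p.2]
  set n := t - s with hn
  set T := Tseq q φ s h n with hT
  have hmeas := aux_Tseq_meas q hq φ hφ s h hh n
  have hbd := aux_Tseq_bdd q hq εlo εhi hεlo hεhi hqb φ hφ s h hh C hhb n
  have hoscT := aux_Tseq_osc q hq εlo εhi hεlo hεhi hqb φ hφ s h hh C hhb hinf hosc' n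
  set D := (1 - εlo/εhi)^n * hinf with hD
  have hTint : Integrable T φ' := aux_integrable_of_bdd hmeas C hbd
  set m := ∫ x', T x' ∂φ' with hm
  have hdev : ∀ x, |T x - m| ≤ D := by
    intro x
    have heq : T x - m = ∫ x', (T x - T x') ∂φ' := by
      rw [integral_sub (integrable_const _) hTint, integral_const]
      simp
      exact hm
    rw [heq]
    have hni := norm_integral_le_integral_norm (μ := φ') (f := fun x' => T x - T x')
    rw [Real.norm_eq_abs] at hni
    refine hni.trans ?_
    have hint : ∫ x', ‖T x - T x'‖ ∂φ' ≤ ∫ (_ : X), D ∂φ' := by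
      apply integral_mono ((integrable_const (T x)).sub hTint).norm (integrable_const D)
      intro x'
      simp only [Real.norm_eq_abs]
      exact hoscT x x'
    simpa using hint
  have hmain : ∫ x, (T x - m)^2 ∂φ' ≤ ∫ (_ : X), D^2 ∂φ' := by
    apply integral_mono
    · refine aux_integrable_of_bdd ((hmeas.sub measurable_const).pow_const 2) (D^2) fun x => ?_
      rw [abs_of_nonneg (sq_nonneg _)]
      exact sq_le_sq' (by linarith [(abs_le.mp (hdev x)).1]) (abs_le.mp (hdev x)).2
    · exact integrable_const _
    · intro x
      exact sq_le_sq' (by linarith [(abs_le.mp (hdev x)).1]) (abs_le.mp (hdev x)).2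
  refine hmain.trans ?_
  rw [integral_const]
  simp only [probReal_univ, ENNReal.toReal_one, smul_eq_mul, one_mul]
  refine le_of_eq ?_
  rw [hD, hρ, mul_pow, ← pow_mul, Nat.mul_comm]
end

section
/- Under the strong-mixing framework, let s ≤ ℓ, let h : X → ℝ be bounded measurable with osc(h) ≤ h∞, let (φ_u)_{u≥s} be arbitrary probability measures on X, and define T_{s|s} := h and T_{s|u+1}(y) := ∫ T_{s|u}(x) B_{φ_u}(y, dx). Then for all x, y ∈ X, |T_{s|ℓ}(x) − T_{s|ℓ+1}(y)| ≤ 2 ρ^{ℓ−s} h∞. -/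
open MeasureTheory

section Aux

variable {X : Type*} [MeasurableSpace X]

lemma bddAbove_osc {f : X → ℝ} {C : ℝ} (hC : ∀ x, |f x| ≤ C) :
    BddAbove (Set.range fun p : X × X => |f p.1 - f p.2|) := by
  refine ⟨2 * C, ?_⟩
  rintro r ⟨p, rfl⟩
  calc |f p.1 - f p.2| ≤ |f p.1| + |f p.2| := abs_sub _ _
    _ ≤ C + C := add_le_add (hC _) (hC _)
    _ = 2 * C := by ring

lemma pair_le_osc {f : X → ℝ} {C : ℝ} (hC : ∀ x, |f x| ≤ C) (x x' : X) :
    |f x - f x'| ≤ osc f :=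
  le_ciSup (bddAbove_osc hC) (x, x')

lemma osc_nonneg' {f : X → ℝ} {C : ℝ} (hC : ∀ x, |f x| ≤ C) (x : X) : 0 ≤ osc f := by
  have := pair_le_osc hC x x
  simpa using this

lemma osc_le_of_pairs [Nonempty X] {f : X → ℝ} {b : ℝ}
    (h : ∀ x x', |f x - f x'| ≤ b) : osc f ≤ b :=
  ciSup_le fun p => h p.1 p.2

variable (q : X → X → ℝ) (hq : Measurable (Function.uncurry q))
  (εlo εhi : ℝ) (hεlo : 0 < εlo) (hεhi : εlo < εhi)
  (hqb : ∀ x x', q x x' ∈ Set.Icc εlo εhi)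

include hq hεlo hεhi hqb in
lemma integrable_mul_q (μ : Measure X) [IsProbabilityMeasure μ]
    {f : X → ℝ} (hf : Measurable f) {C : ℝ} (hfb : ∀ x, |f x| ≤ C) (y : X) :
    Integrable (fun x => f x * q x y) μ := by
  have hm : Measurable fun x => f x * q x y :=
    hf.mul (hq.comp (measurable_id.prodMk measurable_const))
  refine ⟨hm.aestronglyMeasurable, ?_⟩
  apply HasFiniteIntegral.of_bounded (C := |C| * εhi)
  filter_upwards with x
  have h1 := hqb x y
  have h2 := hfb x
  simp only [Set.mem_Icc] at h1
  have : |f x * q x y| = |f x| * q x y := by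
    rw [abs_mul, abs_of_nonneg (le_trans hεlo.le h1.1)]
  rw [Real.norm_eq_abs, this]
  have hC : |f x| ≤ |C| := le_trans h2 (le_abs_self C)
  exact mul_le_mul hC h1.2 (le_trans hεlo.le h1.1) (abs_nonneg _)

include hq hεlo hεhi hqb in
lemma integrable_q (μ : Measure X) [IsProbabilityMeasure μ] (y : X) :
    Integrable (fun x => q x y) μ := by
  have := integrable_mul_q q hq εlo εhi hεlo hεhi hqb μ (f := fun _ => 1)
    measurable_const (C := 1) (fun x => by simp) y
  simpa using this

include hq hεlo hεhi hqb in
lemma Z_bounds (μ : Measure X) [IsProbabilityMeasure μ] (y : X) :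
    εlo ≤ (∫ x, q x y ∂μ) ∧ (∫ x, q x y ∂μ) ≤ εhi := by
  have hint := integrable_q q hq εlo εhi hεlo hεhi hqb μ y
  constructor
  · calc εlo = ∫ _x, εlo ∂μ := by simp
      _ ≤ ∫ x, q x y ∂μ :=
        integral_mono (integrable_const _) hint (fun x => (hqb x y).1)
  · calc (∫ x, q x y ∂μ) ≤ ∫ _x, εhi ∂μ :=
        integral_mono hint (integrable_const _) (fun x => (hqb x y).2)
      _ = εhi := by simp

include hq hεlo hεhi hqb in
/-- The key one-step bounds. -/
lemma step_bounds [Nonempty X] (μ : Measure X) [IsProbabilityMeasure μ]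
    {f : X → ℝ} (hf : Measurable f) {C : ℝ} (hfb : ∀ x, |f x| ≤ C) :
    (∀ y, |(∫ x, f x * q x y ∂μ) / (∫ x, q x y ∂μ)| ≤ C) ∧
    (∀ x y, |f x - (∫ x, f x * q x y ∂μ) / (∫ x, q x y ∂μ)| ≤ osc f) ∧
    (∀ y y', |(∫ x, f x * q x y ∂μ) / (∫ x, q x y ∂μ)
        - (∫ x, f x * q x y' ∂μ) / (∫ x, q x y' ∂μ)| ≤ (1 - εlo / εhi) * osc f) := by
  obtain ⟨x₀⟩ := ‹Nonempty X›
  set Z : X → ℝ := fun y => ∫ x, q x y ∂μ with hZ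
  set N : X → ℝ := fun y => ∫ x, f x * q x y ∂μ with hN
  have hZb : ∀ y, εlo ≤ Z y ∧ Z y ≤ εhi := Z_bounds q hq εlo εhi hεlo hεhi hqb μ
  have hZpos : ∀ y, 0 < Z y := fun y => lt_of_lt_of_le hεlo (hZb y).1
  have hqint : ∀ y, Integrable (fun x => q x y) μ :=
    integrable_q q hq εlo εhi hεlo hεhi hqb μ
  have hfqint : ∀ y, Integrable (fun x => f x * q x y) μ :=
    integrable_mul_q q hq εlo εhi hεlo hεhi hqb μ hf hfb
  -- bounds on f via inf and osc
  set m : ℝ := ⨅ x, f x with hm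
  have hbdd : BddBelow (Set.range f) := ⟨-C, by rintro r ⟨x, rfl⟩; linarith [abs_le.1 (hfb x)]⟩
  have hmle : ∀ x, m ≤ f x := fun x => ciInf_le hbdd x
  have hfle : ∀ x, f x ≤ m + osc f := by
    intro x
    have : ∀ x', f x - osc f ≤ f x' := by
      intro x'
      have := pair_le_osc hfb x x'
      have := abs_le.1 this
      linarith [this.1, this.2]
    have : f x - osc f ≤ m := le_ciInf this
    linarith
  have hosc0 : 0 ≤ osc f := osc_nonneg' hfb x₀
  -- N bounds: a * Z y ≤ N y ≤ b * Z y for pointwise bounds a ≤ f ≤ b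
  have hNub : ∀ (b : ℝ), (∀ x, f x ≤ b) → ∀ y, N y ≤ b * Z y := by
    intro b hb y
    have : N y ≤ ∫ x, b * q x y ∂μ := by
      refine integral_mono (hfqint y) ((hqint y).const_mul b) (fun x => ?_)
      exact mul_le_mul_of_nonneg_right (hb x) (le_trans hεlo.le (hqb x y).1)
    simpa [integral_const_mul] using this
  have hNlb : ∀ (a : ℝ), (∀ x, a ≤ f x) → ∀ y, a * Z y ≤ N y := by
    intro a ha y
    have : (∫ x, a * q x y ∂μ) ≤ N y := by
      refine integral_mono ((hqint y).const_mul a) (hfqint y) (fun x => ?_)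
      exact mul_le_mul_of_nonneg_right (ha x) (le_trans hεlo.le (hqb x y).1)
    simpa [integral_const_mul] using this
  have hgub : ∀ (b : ℝ), (∀ x, f x ≤ b) → ∀ y, N y / Z y ≤ b := by
    intro b hb y
    rw [div_le_iff₀ (hZpos y)]
    exact hNub b hb y
  have hglb : ∀ (a : ℝ), (∀ x, a ≤ f x) → ∀ y, a ≤ N y / Z y := by
    intro a ha y
    rw [le_div_iff₀ (hZpos y)]
    exact hNlb a ha y
  refine ⟨?_, ?_, ?_⟩
  · intro y
    rw [abs_le]
    constructor
    · exact hglb (-C) (fun x => (abs_le.1 (hfb x)).1) y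
    · exact hgub C (fun x => (abs_le.1 (hfb x)).2) y
  · intro x y
    have h1 : N y / Z y ≤ m + osc f := hgub _ hfle y
    have h2 : m ≤ N y / Z y := hglb _ hmle y
    have h3 := hmle x
    have h4 := hfle x
    rw [abs_le]
    constructor <;> linarith
  · -- the contraction
    set c : ℝ := εlo / εhi with hc
    have hc0 : 0 < c := div_pos hεlo (lt_trans hεlo hεhi)
    have hc1 : c < 1 := (div_lt_one (lt_trans hεlo hεhi)).2 hεhi
    -- M y := ∫ (f x - m) q x y
    set F : X → ℝ := fun x => f x - m with hF
    have hFmeas : Measurable F := hf.sub measurable_const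
    have hFb : ∀ x, |F x| ≤ C + |m| := by
      intro x
      calc |F x| ≤ |f x| + |m| := abs_sub _ _
        _ ≤ C + |m| := by linarith [hfb x]
    have hFqint : ∀ y, Integrable (fun x => F x * q x y) μ :=
      integrable_mul_q q hq εlo εhi hεlo hεhi hqb μ hFmeas hFb
    set M : X → ℝ := fun y => ∫ x, F x * q x y ∂μ with hM
    have hFint : Integrable F μ := by
      refine ⟨hFmeas.aestronglyMeasurable, ?_⟩
      exact HasFiniteIntegral.of_bounded (C := C + |m|) (ae_of_all _ fun x => hFb x)
    set I : ℝ := ∫ x, F x ∂μ with hI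
    have hI0 : 0 ≤ I := integral_nonneg (fun x => sub_nonneg.2 (hmle x))
    -- relation between N and M: N y = M y + m * Z y
    have hNM : ∀ y, N y = M y + m * Z y := by
      intro y
      have : M y = ∫ x, (f x * q x y - m * q x y) ∂μ := by
        simp only [hM, hF]; congr 1; ext x; ring
      rw [this, integral_sub (hfqint y) ((hqint y).const_mul m), integral_const_mul]
      simp [hN, hZ]
    have hgM : ∀ y, N y / Z y = M y / Z y + m := by
      intro y
      rw [hNM y, add_div, mul_div_assoc, div_self (hZpos y).ne', mul_one]
    -- upper bound: M y ≤ ((1 - c) * osc f + c * I) * Z y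
    have hMub : ∀ y, M y ≤ ((1 - c) * osc f + c * I) * Z y := by
      intro y
      have hcZ : c * Z y ≤ εlo := by
        rw [hc]
        calc εlo / εhi * Z y ≤ εlo / εhi * εhi :=
          mul_le_mul_of_nonneg_left (hZb y).2 (le_of_lt hc0)
          _ = εlo := div_mul_cancel₀ _ (ne_of_gt (lt_trans hεlo hεhi))
      have hpt : ∀ x, F x * q x y ≤ osc f * (q x y - c * Z y) + c * Z y * F x := by
        intro x
        have hF0 : 0 ≤ F x := sub_nonneg.2 (hmle x)
        have hFosc : F x ≤ osc f := by
          have := hfle x; show f x - m ≤ osc f; linarith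
        have hqc : 0 ≤ q x y - c * Z y := by linarith [(hqb x y).1]
        nlinarith [mul_le_mul_of_nonneg_right hFosc hqc]
      have hint1 : Integrable (fun x => osc f * (q x y - c * Z y)) μ := by
        apply Integrable.const_mul
        exact (hqint y).sub (integrable_const _)
      have hint2 : Integrable (fun x => c * Z y * F x) μ := hFint.const_mul _
      have heq : (∫ x, (osc f * (q x y - c * Z y) + c * Z y * F x) ∂μ)
          = osc f * (Z y - c * Z y) + c * Z y * I := by
        rw [integral_add hint1 hint2, integral_const_mul, integral_const_mul,
          integral_sub (hqint y) (integrable_const _), integral_const]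
        simp
        rfl
      have : M y ≤ ∫ x, (osc f * (q x y - c * Z y) + c * Z y * F x) ∂μ :=
        integral_mono (hFqint y) (hint1.add hint2) hpt
      rw [heq] at this
      calc M y ≤ osc f * (Z y - c * Z y) + c * Z y * I := this
        _ = ((1 - c) * osc f + c * I) * Z y := by ring
    -- lower bound: c * I * Z y ≤ M y
    have hMlb : ∀ y, c * I * Z y ≤ M y := by
      intro y
      have hcZ : c * Z y ≤ εlo := by
        rw [hc]
        calc εlo / εhi * Z y ≤ εlo / εhi * εhi :=
          mul_le_mul_of_nonneg_left (hZb y).2 (le_of_lt hc0)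
          _ = εlo := div_mul_cancel₀ _ (ne_of_gt (lt_trans hεlo hεhi))
      have hpt : ∀ x, c * Z y * F x ≤ F x * q x y := by
        intro x
        have hF0 : 0 ≤ F x := sub_nonneg.2 (hmle x)
        have : c * Z y ≤ q x y := le_trans hcZ (hqb x y).1
        nlinarith
      have : (∫ x, c * Z y * F x ∂μ) ≤ M y :=
        integral_mono (hFint.const_mul _) (hFqint y) hpt
      rw [integral_const_mul] at this
      calc c * I * Z y = c * Z y * I := by ring
        _ ≤ M y := this
    have hstep : ∀ y y', N y / Z y - N y' / Z y' ≤ (1 - c) * osc f := by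
      intro y y'
      rw [hgM y, hgM y']
      have h1 : M y / Z y ≤ (1 - c) * osc f + c * I := by
        rw [div_le_iff₀ (hZpos y)]; exact hMub y
      have h2 : c * I ≤ M y' / Z y' := by
        rw [le_div_iff₀ (hZpos y')]; exact hMlb y'
      linarith
    intro y y'
    rw [abs_le]
    constructor
    · linarith [hstep y' y]
    · linarith [hstep y y']

end Aux

/-- under the strong mixing assumption, if `osc(h) ≤ h∞` then for all
`x, y ∈ X` and `s ≤ ℓ`, `|T_{s|ℓ}(x) − T_{s|ℓ+1}(y)| ≤ 2 ρ^{ℓ−s} h∞`. -/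
theorem stmt10 {X : Type*} [MeasurableSpace X]
    (q : X → X → ℝ) (hq : Measurable (Function.uncurry q))
    (εlo εhi : ℝ) (hεlo : 0 < εlo) (hεhi : εlo < εhi)
    (hqb : ∀ x x', q x x' ∈ Set.Icc εlo εhi)
    (ρ : ℝ) (hρ : ρ = 1 - εlo / εhi)
    (φ : ℕ → Measure X) (hφ : ∀ u, IsProbabilityMeasure (φ u))
    (s ℓ : ℕ) (hsl : s ≤ ℓ)
    (h : X → ℝ) (hh : Measurable h) (C : ℝ) (hhb : ∀ x, |h x| ≤ C)
    (hinf : ℝ) (hosc : osc h ≤ hinf) :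
    ∀ x y : X,
      |Tseq q φ s h (ℓ - s) x - Tseq q φ s h (ℓ + 1 - s) y| ≤ 2 * ρ ^ (ℓ - s) * hinf := by
  intro x y
  haveI : Nonempty X := ⟨x⟩
  haveI : ∀ u, IsProbabilityMeasure (φ u) := hφ
  have hc0 : 0 < εlo / εhi := div_pos hεlo (lt_trans hεlo hεhi)
  have hc1 : εlo / εhi < 1 := (div_lt_one (lt_trans hεlo hεhi)).2 hεhi
  have hρ0 : 0 ≤ ρ := by rw [hρ]; linarith
  -- main induction: measurability, boundedness, osc contraction
  have main : ∀ k, Measurable (Tseq q φ s h k) ∧ (∀ x, |Tseq q φ s h k x| ≤ C) ∧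
      osc (Tseq q φ s h k) ≤ ρ ^ k * osc h := by
    intro k
    induction k with
    | zero => exact ⟨hh, hhb, by simp [Tseq]⟩
    | succ n ih =>
      obtain ⟨hmeas, hbd, hoscn⟩ := ih
      have hstep := step_bounds q hq εlo εhi hεlo hεhi hqb (φ (s + n)) hmeas hbd
      obtain ⟨hb', _, hcontr⟩ := hstep
      have hTn1 : Tseq q φ s h (n + 1) = fun y =>
          (∫ x, Tseq q φ s h n x * q x y ∂(φ (s + n))) / ∫ x, q x y ∂(φ (s + n)) := rfl
      refine ⟨?_, ?_, ?_⟩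
      · rw [hTn1]
        have h1 : Measurable fun y => ∫ x, Tseq q φ s h n x * q x y ∂(φ (s + n)) := by
          have : StronglyMeasurable fun p : X × X => Tseq q φ s h n p.1 * q p.1 p.2 :=
            ((hmeas.comp measurable_fst).mul hq).stronglyMeasurable
          exact this.integral_prod_left'.measurable
        have h2 : Measurable fun y => ∫ x, q x y ∂(φ (s + n)) :=
          hq.stronglyMeasurable.integral_prod_left'.measurable
        exact h1.div h2
      · intro x'
        rw [hTn1]
        exact hb' x'
      · have : osc (Tseq q φ s h (n + 1)) ≤ (1 - εlo / εhi) * osc (Tseq q φ s h n) := by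
          apply osc_le_of_pairs
          intro a b
          rw [hTn1]
          exact hcontr a b
        calc osc (Tseq q φ s h (n + 1)) ≤ (1 - εlo / εhi) * osc (Tseq q φ s h n) := this
          _ ≤ (1 - εlo / εhi) * (ρ ^ n * osc h) := by
            apply mul_le_mul_of_nonneg_left hoscn; linarith
          _ = ρ ^ (n + 1) * osc h := by rw [hρ]; ring
  set k := ℓ - s with hk
  have hk1 : ℓ + 1 - s = k + 1 := by omega
  rw [hk1]
  obtain ⟨hmeas, hbd, hoscn⟩ := main k
  have hstep := step_bounds q hq εlo εhi hεlo hεhi hqb (φ (s + k)) hmeas hbd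
  obtain ⟨_, hclose, _⟩ := hstep
  have h1 : |Tseq q φ s h k x - Tseq q φ s h (k + 1) y| ≤ osc (Tseq q φ s h k) := hclose x y
  have hosc0 : 0 ≤ osc h := osc_nonneg' hhb x
  have hρk : 0 ≤ ρ ^ k := pow_nonneg hρ0 k
  calc |Tseq q φ s h k x - Tseq q φ s h (k + 1) y| ≤ osc (Tseq q φ s h k) := h1
    _ ≤ ρ ^ k * osc h := hoscn
    _ ≤ ρ ^ k * hinf := mul_le_mul_of_nonneg_left hosc hρk
    _ ≤ 2 * ρ ^ k * hinf := by nlinarith [le_trans hosc0 hosc]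
end
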